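/- Fix a real number a ≠ 0 and let G be the subgroup of isometries of ℝ³ generated by the four maps R₀(x,y,z) = (−z, −y + a, −x), R₁(x,y,z) = (y, x, z), R₂(x,y,z) = (−z, y, −x), R̂₂(x,y,z) = (z, y, x). Then the orbit of the origin under G (the vertex set of the regular complex K₄(1,2)) equals the cubic lattice aℤ³ = {(am₁, am₂, am₃) : m₁, m₂, m₃ ∈ ℤ}. -/

import Mathlib

/- STATEMENT 13: For a ≠ 0, the orbit of the origin under the group generated by
R₀(x,y,z) = (−z, −y + a, −x), R₁(x,y,z) = (y, x, z), R₂(x,y,z) = (−z, y, −x),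
R̂₂(x,y,z) = (z, y, x) (the vertex set of K₄(1,2)) is the cubic lattice aℤ³. -/

noncomputable section

abbrev E3 : Type := EuclideanSpace ℝ (Fin 3)

def pt (x y z : ℝ) : E3 := WithLp.toLp 2 ![x, y, z]

/-!
Every generator maps `aℤ³` onto itself (its only translation part, `a` in `R₀`, lies in `aℤ`),
so the orbit of the origin stays in `aℤ³`. Conversely `R₀R₂ · R₁R₂R̂₂R₁` is the glide
reflection `(x, y, z) ↦ (x, y + a, -z)`, its conjugates by the coordinate swaps `R₁` and
`R̂₂R₁R̂₂` are glides along the other two axes, and suitable powers of the three glides carry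
the origin to any point of `aℤ³`.
-/

open AddSubgroup

@[simp] lemma pt_apply_zero (x y z : ℝ) : pt x y z 0 = x := rfl
@[simp] lemma pt_apply_one (x y z : ℝ) : pt x y z 1 = y := rfl
@[simp] lemma pt_apply_two (x y z : ℝ) : pt x y z 2 = z := rfl

lemma E3.ext_coords {p q : E3} (h0 : p 0 = q 0) (h1 : p 1 = q 1) (h2 : p 2 = q 2) : p = q := by
  ext i
  fin_cases i <;> assumption

def cubicLattice (a : ℝ) : Set E3 :=
  {y | ∃ m1 m2 m3 : ℤ, y 0 = a * m1 ∧ y 1 = a * m2 ∧ y 2 = a * m3}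

lemma mem_cubicLattice_iff {a : ℝ} {p : E3} :
    p ∈ cubicLattice a ↔ p 0 ∈ zmultiples a ∧ p 1 ∈ zmultiples a ∧ p 2 ∈ zmultiples a := by
  simp only [cubicLattice, Set.mem_ofPred_eq, mem_zmultiples_iff, zsmul_eq_mul, mul_comm a, eq_comm]
  constructor
  · rintro ⟨m1, m2, m3, h1, h2, h3⟩
    exact ⟨⟨m1, h1⟩, ⟨m2, h2⟩, ⟨m3, h3⟩⟩
  · rintro ⟨⟨m1, h1⟩, ⟨m2, h2⟩, ⟨m3, h3⟩⟩
    exact ⟨m1, m2, m3, h1, h2, h3⟩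

theorem apply_mem_iff_of_mem_closure {X : Type*} [PseudoEMetricSpace X] {S : Set (X ≃ᵢ X)}
    {L : Set X} (hS : ∀ g ∈ S, ∀ p, g p ∈ L ↔ p ∈ L) {g : X ≃ᵢ X}
    (hg : g ∈ Subgroup.closure S) (p : X) : g p ∈ L ↔ p ∈ L := by
  induction hg using Subgroup.closure_induction generalizing p with
  | mem g hg => exact hS g hg p
  | one => rfl
  | mul g h _ _ ihg ihh => exact (ihg (h p)).trans (ihh p)
  | inv g _ ih => simpa using (ih (g⁻¹ p)).symm

lemma glide_inv_apply {a : ℝ} {g : E3 ≃ᵢ E3} (hg : ∀ x, g x = pt (x 0) (x 1 + a) (-(x 2)))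
    (x : E3) : g⁻¹ x = pt (x 0) (x 1 - a) (-(x 2)) := by
  apply g.injective
  rw [IsometryEquiv.apply_inv_self, hg]
  exact E3.ext_coords (by simp) (by simp) (by simp)

lemma glide_zpow_apply {a : ℝ} {g : E3 ≃ᵢ E3} (hg : ∀ x, g x = pt (x 0) (x 1 + a) (-(x 2)))
    (n : ℤ) (x : E3) : (g ^ n) x = pt (x 0) (x 1 + n * a) (n.negOnePow * x 2) := by
  induction n using Int.induction_on generalizing x with
  | zero => exact E3.ext_coords (by simp) (by simp) (by simp)
  | succ n ih =>
    rw [zpow_add_one, IsometryEquiv.mul_apply, ih, hg]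
    refine E3.ext_coords (by simp) (by simp only [pt_apply_one]; push_cast; ring) ?_
    simp [Int.negOnePow_succ]
  | pred n ih =>
    rw [zpow_sub_one, IsometryEquiv.mul_apply, ih, glide_inv_apply hg]
    refine E3.ext_coords (by simp) (by simp only [pt_apply_one]; push_cast; ring) ?_
    simp [Int.negOnePow_sub]

lemma exists_mem_apply_zero_eq_pt {a : ℝ} {K : Subgroup (E3 ≃ᵢ E3)}
    {glide swapXY swapYZ : E3 ≃ᵢ E3}
    (hglide : ∀ x, glide x = pt (x 0) (x 1 + a) (-(x 2)))
    (hXY : ∀ x, swapXY x = pt (x 1) (x 0) (x 2)) (hYZ : ∀ x, swapYZ x = pt (x 0) (x 2) (x 1))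
    (hglideK : glide ∈ K) (hXYK : swapXY ∈ K) (hYZK : swapYZ ∈ K) (m1 m2 m3 : ℤ) :
    ∃ g ∈ K, g 0 = pt (a * m1) (a * m2) (a * m3) := by
  -- the two later glide powers flip the z-coordinate `m1 + m2` times; the z-exponent undoes that sign
  set n : ℤ := (m1 + m2).negOnePow * m3
  refine ⟨glide ^ m2 * swapXY * glide ^ m1 * swapXY * swapYZ * glide ^ n * swapYZ,
    mul_mem (mul_mem (mul_mem (mul_mem (mul_mem (mul_mem (zpow_mem hglideK _) hXYK)
      (zpow_mem hglideK _)) hXYK) hYZK) (zpow_mem hglideK _)) hYZK, ?_⟩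
  simp only [IsometryEquiv.mul_apply, hXY, hYZ, glide_zpow_apply hglide, pt_apply_zero,
    pt_apply_one, pt_apply_two, PiLp.zero_apply, zero_add]
  refine E3.ext_coords (by simp only [pt_apply_zero]; ring) (by simp only [pt_apply_one]; ring) ?_
  have hsign : m2.negOnePow * (m1.negOnePow * (m1 + m2).negOnePow) = 1 := by
    rw [← Int.negOnePow_add, ← Int.negOnePow_add]
    exact Int.negOnePow_even _ ⟨m1 + m2, by ring⟩
  have hsignR := congrArg (fun u : ℤˣ => ((u : ℤ) : ℝ)) hsign
  push_cast at hsignR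
  simp only [n, pt_apply_two]
  push_cast
  linear_combination (a * m3) * hsignR

theorem vertex_set_K4_12_general
    (a : ℝ)
    (R0 R1 R2 R2' : E3 ≃ᵢ E3)
    (hR0 : ∀ x : E3, R0 x = pt (-(x 2)) (-(x 1) + a) (-(x 0)))
    (hR1 : ∀ x : E3, R1 x = pt (x 1) (x 0) (x 2))
    (hR2 : ∀ x : E3, R2 x = pt (-(x 2)) (x 1) (-(x 0)))
    (hR2' : ∀ x : E3, R2' x = pt (x 2) (x 1) (x 0)) :
    {y : E3 | ∃ g ∈ Subgroup.closure {R0, R1, R2, R2'}, g 0 = y} =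
      {y : E3 | ∃ m1 m2 m3 : ℤ, y 0 = a * m1 ∧ y 1 = a * m2 ∧ y 2 = a * m3} := by
  set K := Subgroup.closure ({R0, R1, R2, R2'} : Set (E3 ≃ᵢ E3))
  have hgen : ∀ g ∈ ({R0, R1, R2, R2'} : Set (E3 ≃ᵢ E3)), ∀ p,
      g p ∈ cubicLattice a ↔ p ∈ cubicLattice a := by
    rintro g (rfl | rfl | rfl | rfl) p <;>
      simp only [hR0, hR1, hR2, hR2', mem_cubicLattice_iff, pt_apply_zero, pt_apply_one,
        pt_apply_two, neg_mem_iff, add_mem_cancel_right (mem_zmultiples a)] <;> tauto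
  have hR0K : R0 ∈ K := Subgroup.subset_closure (by simp)
  have hR1K : R1 ∈ K := Subgroup.subset_closure (by simp)
  have hR2K : R2 ∈ K := Subgroup.subset_closure (by simp)
  have hR2'K : R2' ∈ K := Subgroup.subset_closure (by simp)
  -- reflection in the plane `y = a / 2` composed with the half-turn about the x-axis
  have hglide : ∀ x, (R0 * R2 * (R1 * R2 * R2' * R1)) x = pt (x 0) (x 1 + a) (-(x 2)) := by
    intro x
    simp only [IsometryEquiv.mul_apply, hR0, hR1, hR2, hR2']
    exact E3.ext_coords (by simp) (by simp) (by simp)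
  have hswapYZ : ∀ x, (R2' * R1 * R2') x = pt (x 0) (x 2) (x 1) := by
    intro x
    simp only [IsometryEquiv.mul_apply, hR1, hR2']
    exact E3.ext_coords (by simp) (by simp) (by simp)
  ext y
  constructor
  · rintro ⟨g, hg, rfl⟩
    exact (apply_mem_iff_of_mem_closure hgen hg 0).2 ⟨0, 0, 0, by simp⟩
  · rintro ⟨m1, m2, m3, h1, h2, h3⟩
    obtain ⟨g, hg, hg0⟩ := exists_mem_apply_zero_eq_pt hglide hR1 hswapYZ
      (mul_mem (mul_mem hR0K hR2K) (mul_mem (mul_mem (mul_mem hR1K hR2K) hR2'K) hR1K)) hR1K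
      (mul_mem (mul_mem hR2'K hR1K) hR2'K) m1 m2 m3
    exact ⟨g, hg, hg0.trans (E3.ext_coords (by simp [h1]) (by simp [h2]) (by simp [h3]))⟩

theorem vertex_set_K4_12
    (a : ℝ) (ha : a ≠ 0)
    (R0 R1 R2 R2' : E3 ≃ᵢ E3)
    (hR0 : ∀ x : E3, R0 x = pt (-(x 2)) (-(x 1) + a) (-(x 0)))
    (hR1 : ∀ x : E3, R1 x = pt (x 1) (x 0) (x 2))
    (hR2 : ∀ x : E3, R2 x = pt (-(x 2)) (x 1) (-(x 0)))
    (hR2' : ∀ x : E3, R2' x = pt (x 2) (x 1) (x 0)) :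
    {y : E3 | ∃ g ∈ Subgroup.closure {R0, R1, R2, R2'}, g 0 = y} =
      {y : E3 | ∃ m1 m2 m3 : ℤ, y 0 = a * m1 ∧ y 1 = a * m2 ∧ y 2 = a * m3} :=
  vertex_set_K4_12_general a R0 R1 R2 R2' hR0 hR1 hR2 hR2'
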